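/- arXiv:math/0101145 — 2 statements merged into one kernel-verified Lean document; each statement's English description precedes it below -/
import Mathlib

section
/- Let U ⊆ ℝ² be a convex open set with coordinates (u,v), let x, y : U → ℝ be C² functions satisfying the Cauchy–Riemann equations ∂_u x − ∂_v y = 0 and ∂_u y + ∂_v x = 0, and let z : U → ℝ be a C² harmonic function. Then there exists a C² function τ : U → ℝ such that ∂_u τ = ∂_v z + x·∂_v y and ∂_v τ = x·∂_v x − ∂_u z on U; consequently (x,y,z,τ) satisfies the full ∂̄_J system (i) ∂_u x − ∂_v y = 0, (ii) ∂_u y + ∂_v x = 0, (iii) ∂_u τ − ∂_v z = x·∂_v y, (iv) ∂_u z + ∂_v τ = x·∂_v x. Moreover, if U is nonempty and connected, any two such functions τ differ by an additive constant. (This is the lifting step, via Lemmas 4.14–4.15 and the Poincaré lemma, in the proof of the Translation Theorem.) -/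
/-- Partial derivative with respect to the first coordinate `u`. -/
noncomputable def pdu (f : ℝ × ℝ → ℝ) (p : ℝ × ℝ) : ℝ := fderiv ℝ f p (1, 0)

/-- Partial derivative with respect to the second coordinate `v`. -/
noncomputable def pdv (f : ℝ × ℝ → ℝ) (p : ℝ × ℝ) : ℝ := fderiv ℝ f p (0, 1)

/-! The 1-form `ω = (∂_v z + x ∂_v y) du + (x ∂_v x − ∂_u z) dv` is closed: the difference
`∂_v(∂_v z + x ∂_v y) − ∂_u(x ∂_v x − ∂_u z)` equals
`Δz + x (∂_v ∂_v y − ∂_u ∂_v x) + ∂_v x (∂_v y − ∂_u x)`, which vanishes by harmonicity of `z`,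
the first Cauchy–Riemann equation and the symmetry of second derivatives of `x`.
By the Poincaré lemma on the convex set `U`, `ω = dτ`, and `τ` is `C²` because `ω` is `C¹`.
Two primitives of `ω` have the same differential, so on a connected open set they differ by a
constant. -/

open ContinuousLinearMap

theorem ContinuousLinearMap.apply_eq_fst_mul_add_snd_mul (L : ℝ × ℝ →L[ℝ] ℝ) (e : ℝ × ℝ) :
    L e = e.1 * L (1, 0) + e.2 * L (0, 1) := by
  conv_lhs => rw [show e = e.1 • ((1 : ℝ), (0 : ℝ)) + e.2 • ((0 : ℝ), (1 : ℝ)) by simp]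
  simp only [map_add, map_smul, smul_eq_mul]

section

variable {U : Set (ℝ × ℝ)} {f P Q : ℝ × ℝ → ℝ}

theorem contDiffOn_pdu {m n : WithTop ℕ∞} (hU : IsOpen U) (hf : ContDiffOn ℝ m f U)
    (hmn : n + 1 ≤ m) : ContDiffOn ℝ n (pdu f) U :=
  (hf.fderiv_of_isOpen hU hmn).clm_apply contDiffOn_const

theorem contDiffOn_pdv {m n : WithTop ℕ∞} (hU : IsOpen U) (hf : ContDiffOn ℝ m f U)
    (hmn : n + 1 ≤ m) : ContDiffOn ℝ n (pdv f) U :=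
  (hf.fderiv_of_isOpen hU hmn).clm_apply contDiffOn_const

theorem pdu_pdv_comm {p : ℝ × ℝ} (hf : ContDiffAt ℝ 2 f p) : pdu (pdv f) p = pdv (pdu f) p := by
  have hdf : DifferentiableAt ℝ (fderiv ℝ f) p :=
    (hf.fderiv_right (m := 1) le_rfl).differentiableAt one_ne_zero
  change fderiv ℝ (fun q => fderiv ℝ f q (0, 1)) p (1, 0) =
    fderiv ℝ (fun q => fderiv ℝ f q (1, 0)) p (0, 1)
  rw [fderiv_clm_apply hdf (differentiableAt_const _),
    fderiv_clm_apply hdf (differentiableAt_const _)]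
  simpa using hf.isSymmSndFDerivAt (by simp) (1, 0) (0, 1)

/-- The 1-form `P du + Q dv` is closed on `U`. -/
def IsClosedForm (U : Set (ℝ × ℝ)) (P Q : ℝ × ℝ → ℝ) : Prop := ∀ p ∈ U, pdv P p = pdu Q p

theorem Convex.exists_hasFDerivAt_of_isClosedForm (hconv : Convex ℝ U) (hU : IsOpen U)
    (hP : DifferentiableOn ℝ P U) (hQ : DifferentiableOn ℝ Q U) (hPQ : IsClosedForm U P Q) :
    ∃ τ : ℝ × ℝ → ℝ, ∀ p ∈ U, HasFDerivAt τ (P p • fst ℝ ℝ ℝ + Q p • snd ℝ ℝ ℝ) p := by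
  refine hconv.exists_forall_hasFDerivAt_of_fderiv_symmetric hU
    ((hP.smul_const _).add (hQ.smul_const _)) fun p hp e e' => ?_
  have hdP := (hP.differentiableAt (hU.mem_nhds hp)).hasFDerivAt
  have hdQ := (hQ.differentiableAt (hU.mem_nhds hp)).hasFDerivAt
  rw [((hdP.smul_const (fst ℝ ℝ ℝ)).fun_add (hdQ.smul_const (snd ℝ ℝ ℝ))).fderiv]
  have hclosed := hPQ p hp
  simp only [pdu, pdv] at hclosed
  simp only [add_apply, smulRight_apply, smul_apply, coe_fst', coe_snd', smul_eq_mul]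
  rw [apply_eq_fst_mul_add_snd_mul (fderiv ℝ P p) e, apply_eq_fst_mul_add_snd_mul (fderiv ℝ Q p) e,
    apply_eq_fst_mul_add_snd_mul (fderiv ℝ P p) e', apply_eq_fst_mul_add_snd_mul (fderiv ℝ Q p) e']
  linear_combination (e.2 * e'.1 - e.1 * e'.2) * hclosed

theorem Convex.exists_contDiffOn_pdu_pdv_eq_of_isClosedForm {n : ℕ} (hn : n ≠ 0)
    (hconv : Convex ℝ U) (hU : IsOpen U) (hP : ContDiffOn ℝ n P U) (hQ : ContDiffOn ℝ n Q U)
    (hPQ : IsClosedForm U P Q) :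
    ∃ τ : ℝ × ℝ → ℝ, ContDiffOn ℝ (n + 1) τ U ∧ (∀ p ∈ U, pdu τ p = P p) ∧
      ∀ p ∈ U, pdv τ p = Q p := by
  have hn' : (n : WithTop ℕ∞) ≠ 0 := by exact_mod_cast hn
  obtain ⟨τ, hτ⟩ := hconv.exists_hasFDerivAt_of_isClosedForm hU (hP.differentiableOn hn')
    (hQ.differentiableOn hn') hPQ
  refine ⟨τ, (contDiffOn_succ_iff_fderiv_of_isOpen hU).2 ⟨?_, ?_, ?_⟩, ?_, ?_⟩
  · exact fun p hp => (hτ p hp).differentiableAt.differentiableWithinAt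
  · simp
  · exact ((hP.smul contDiffOn_const).add (hQ.smul contDiffOn_const)).congr
      fun p hp => (hτ p hp).fderiv
  · intro p hp
    simp [pdu, (hτ p hp).fderiv]
  · intro p hp
    simp [pdv, (hτ p hp).fderiv]

variable {x y z : ℝ × ℝ → ℝ}

theorem isClosedForm_of_cauchyRiemann_of_harmonic (hU : IsOpen U) (hx : ContDiffOn ℝ 2 x U)
    (hy : ContDiffOn ℝ 2 y U) (hz : ContDiffOn ℝ 2 z U) (hCR1 : ∀ p ∈ U, pdu x p - pdv y p = 0)
    (hharm : ∀ p ∈ U, pdu (pdu z) p + pdv (pdv z) p = 0) :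
    IsClosedForm U (fun q => pdv z q + x q * pdv y q) (fun q => x q * pdv x q - pdu z q) := by
  intro p hp
  have hpU := hU.mem_nhds hp
  have hdiff {f : ℝ × ℝ → ℝ} (hf : ContDiffOn ℝ 1 f U) : DifferentiableAt ℝ f p :=
    (hf.contDiffAt hpU).differentiableAt one_ne_zero
  have hxp := hdiff (hx.of_le one_le_two)
  have hdxv := hdiff (contDiffOn_pdv hU hx (n := 1) (by norm_num))
  have hdyv := hdiff (contDiffOn_pdv hU hy (n := 1) (by norm_num))
  have hdzu := hdiff (contDiffOn_pdu hU hz (n := 1) (by norm_num))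
  have hdzv := hdiff (contDiffOn_pdv hU hz (n := 1) (by norm_num))
  have hvvy : pdv (pdv y) p = pdu (pdv x) p := by
    have hev : pdv y =ᶠ[nhds p] pdu x :=
      Filter.eventually_of_mem hpU fun q hq => (sub_eq_zero.1 (hCR1 q hq)).symm
    change fderiv ℝ (pdv y) p (0, 1) = _
    rw [hev.fderiv_eq]
    exact (pdu_pdv_comm (hx.contDiffAt hpU)).symm
  have hvy : pdv y p = pdu x p := (sub_eq_zero.1 (hCR1 p hp)).symm
  change fderiv ℝ (fun q => pdv z q + x q * pdv y q) p (0, 1) =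
    fderiv ℝ (fun q => x q * pdv x q - pdu z q) p (1, 0)
  rw [fderiv_fun_add hdzv (hxp.fun_mul hdyv), fderiv_fun_mul hxp hdyv,
    fderiv_fun_sub (hxp.fun_mul hdxv) hdzu, fderiv_fun_mul hxp hdxv]
  simp only [add_apply, sub_apply, smul_apply, smul_eq_mul]
  change pdv (pdv z) p + (x p * pdv (pdv y) p + pdv y p * pdv x p) =
    x p * pdu (pdv x) p + pdv x p * pdu x p - pdu (pdu z) p
  rw [hvvy, hvy]
  linear_combination hharm p hp

theorem IsOpen.exists_eq_add_of_pdu_eq_of_pdv_eq {τ₁ τ₂ : ℝ × ℝ → ℝ} (hU : IsOpen U)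
    (hconn : IsPreconnected U) (h₁ : DifferentiableOn ℝ τ₁ U) (h₂ : DifferentiableOn ℝ τ₂ U)
    (hu : ∀ p ∈ U, pdu τ₁ p = pdu τ₂ p) (hv : ∀ p ∈ U, pdv τ₁ p = pdv τ₂ p) :
    ∃ c : ℝ, ∀ p ∈ U, τ₁ p = τ₂ p + c :=
  hU.exists_eq_add_of_fderiv_eq hconn h₁ h₂ fun p hp => ContinuousLinearMap.ext fun e => by
    rw [apply_eq_fst_mul_add_snd_mul (fderiv ℝ τ₁ p), apply_eq_fst_mul_add_snd_mul (fderiv ℝ τ₂ p)]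
    exact congr_arg₂ (· + ·) (congrArg _ (hu p hp)) (congrArg _ (hv p hp))

end

/-- **The lifting step in the Translation Theorem** (via Lemmas 4.14–4.15 and the
Poincaré lemma): given CR functions `x, y` and a harmonic function `z` on a convex
open set `U ⊆ ℝ²`, there is a C² function `τ` with
`∂_u τ = ∂_v z + x ∂_v y` and `∂_v τ = x ∂_v x − ∂_u z` on `U`; consequently
`(x, y, z, τ)` satisfies the full `∂̄_J` system.  Moreover, if `U` is nonempty and
connected, any two such `τ` differ by an additive constant. -/
theorem lift_tau_exists
    (U : Set (ℝ × ℝ)) (hU : IsOpen U) (hconv : Convex ℝ U)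
    (x y z : ℝ × ℝ → ℝ)
    (hx : ContDiffOn ℝ 2 x U) (hy : ContDiffOn ℝ 2 y U) (hz : ContDiffOn ℝ 2 z U)
    (hCR1 : ∀ p ∈ U, pdu x p - pdv y p = 0)
    (hCR2 : ∀ p ∈ U, pdu y p + pdv x p = 0)
    (hharm : ∀ p ∈ U, pdu (pdu z) p + pdv (pdv z) p = 0) :
    (∃ τ : ℝ × ℝ → ℝ, ContDiffOn ℝ 2 τ U ∧
      (∀ p ∈ U, pdu τ p = pdv z p + x p * pdv y p) ∧
      (∀ p ∈ U, pdv τ p = x p * pdv x p - pdu z p) ∧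
      (∀ p ∈ U,
        pdu x p - pdv y p = 0 ∧
        pdu y p + pdv x p = 0 ∧
        pdu τ p - pdv z p = x p * pdv y p ∧
        pdu z p + pdv τ p = x p * pdv x p)) ∧
    (U.Nonempty → IsConnected U →
      ∀ τ₁ τ₂ : ℝ × ℝ → ℝ,
        ContDiffOn ℝ 2 τ₁ U → ContDiffOn ℝ 2 τ₂ U →
        (∀ p ∈ U, pdu τ₁ p = pdv z p + x p * pdv y p ∧
                  pdv τ₁ p = x p * pdv x p - pdu z p) →
        (∀ p ∈ U, pdu τ₂ p = pdv z p + x p * pdv y p ∧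
                  pdv τ₂ p = x p * pdv x p - pdu z p) →
        ∃ c : ℝ, ∀ p ∈ U, τ₁ p = τ₂ p + c) := by
  have hP : ContDiffOn ℝ (1 : ℕ) (fun q => pdv z q + x q * pdv y q) U :=
    (contDiffOn_pdv hU hz (by norm_num)).add
      ((hx.of_le one_le_two).mul (contDiffOn_pdv hU hy (by norm_num)))
  have hQ : ContDiffOn ℝ (1 : ℕ) (fun q => x q * pdv x q - pdu z q) U :=
    ((hx.of_le one_le_two).mul (contDiffOn_pdv hU hx (by norm_num))).sub
      (contDiffOn_pdu hU hz (by norm_num))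
  obtain ⟨τ, hτ, hτu, hτv⟩ := hconv.exists_contDiffOn_pdu_pdv_eq_of_isClosedForm one_ne_zero hU
    hP hQ (isClosedForm_of_cauchyRiemann_of_harmonic hU hx hy hz hCR1 hharm)
  refine ⟨⟨τ, by exact_mod_cast hτ, hτu, hτv, fun p hp => ⟨hCR1 p hp, hCR2 p hp, ?_, ?_⟩⟩, ?_⟩
  · rw [hτu p hp]; ring
  · rw [hτv p hp]; ring
  rintro - hconn τ₁ τ₂ h₁ h₂ hτ₁ hτ₂
  exact hU.exists_eq_add_of_pdu_eq_of_pdv_eq hconn.isPreconnected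
    (h₁.differentiableOn two_ne_zero) (h₂.differentiableOn two_ne_zero)
    (fun p hp => (hτ₁ p hp).1.trans (hτ₂ p hp).1.symm)
    (fun p hp => (hτ₁ p hp).2.trans (hτ₂ p hp).2.symm)
end

section
/- For every pair of real parameters α and ã, the map F_{α,ã} : ℝ² → ℝ⁴ defined by F_{α,ã}(u,v) = (x,y,z,τ)(u,v) = (e^{−α}cosh(u)cos(v), e^{−α}sinh(u)sin(v), v, u + (1/2)e^{−2α}cosh²(u)cos²(v) + ã) satisfies the ∂̄_J system on all of ℝ²: (i) ∂_u x − ∂_v y = 0, (ii) ∂_u y + ∂_v x = 0, (iii) ∂_u τ − ∂_v z = x·∂_v y, (iv) ∂_u z + ∂_v τ = x·∂_v x. (This is the two-parameter family, claimed in Section 5.2 of the paper, obtained by gluing two straight-line model solutions at a crossing; the parameter α locates the boundary branch point and ã is the vertical translation.) -/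
open Real

/-- The `x`-component of the glued two-parameter family:
`x(u,v) = e^{−α} cosh u · cos v`. -/
noncomputable def glX (α : ℝ) (p : ℝ × ℝ) : ℝ :=
  Real.exp (-α) * Real.cosh p.1 * Real.cos p.2

/-- The `y`-component of the glued two-parameter family:
`y(u,v) = e^{−α} sinh u · sin v`. -/
noncomputable def glY (α : ℝ) (p : ℝ × ℝ) : ℝ :=
  Real.exp (-α) * Real.sinh p.1 * Real.sin p.2

/-- The `z`-component of the glued two-parameter family: `z(u,v) = v`. -/
noncomputable def glZ (p : ℝ × ℝ) : ℝ := p.2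

/-- The `τ`-component of the glued two-parameter family:
`τ(u,v) = u + ½ e^{−2α} cosh²u · cos²v + a₀`. -/
noncomputable def glT (α a₀ : ℝ) (p : ℝ × ℝ) : ℝ :=
  p.1 + (1 / 2) * Real.exp (-(2 * α)) * (Real.cosh p.1) ^ 2 * (Real.cos p.2) ^ 2 + a₀

/-! Since `x + i y = e^{-α} cosh (u + i v)` is holomorphic, (i) and (ii) are the Cauchy–Riemann
equations. Moreover `z = v` and `τ = u + x² / 2 + a₀`, so (iii) and (iv) reduce to the chain rule for
`x² / 2` combined with (i). Below, the eight partial derivatives are computed explicitly. -/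

theorem pdu_eq_of_hasDerivAt {f : ℝ × ℝ → ℝ} {u v a : ℝ} (hf : DifferentiableAt ℝ f (u, v))
    (h : HasDerivAt (fun t => f (t, v)) a u) : pdu f (u, v) = a := by
  have hline : HasDerivAt (fun t : ℝ => (t, v)) ((1 : ℝ), (0 : ℝ)) u :=
    (hasDerivAt_id u).prodMk (hasDerivAt_const u v)
  exact (hf.hasFDerivAt.comp_hasDerivAt_of_eq u hline rfl).unique h

theorem pdv_eq_of_hasDerivAt {f : ℝ × ℝ → ℝ} {u v a : ℝ} (hf : DifferentiableAt ℝ f (u, v))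
    (h : HasDerivAt (fun t => f (u, t)) a v) : pdv f (u, v) = a := by
  have hline : HasDerivAt (fun t : ℝ => (u, t)) ((0 : ℝ), (1 : ℝ)) v :=
    (hasDerivAt_const v u).prodMk (hasDerivAt_id v)
  exact (hf.hasFDerivAt.comp_hasDerivAt_of_eq v hline rfl).unique h

section GluedFamily

variable (α a₀ u v : ℝ)

theorem differentiable_glX : Differentiable ℝ (glX α) := by
  unfold glX; fun_prop

theorem differentiable_glY : Differentiable ℝ (glY α) := by
  unfold glY; fun_prop

theorem differentiable_glT : Differentiable ℝ (glT α a₀) := by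
  unfold glT; fun_prop

theorem pdu_glX : pdu (glX α) (u, v) = exp (-α) * sinh u * cos v :=
  pdu_eq_of_hasDerivAt (differentiable_glX α _) <| by
    simp only [glX]
    exact ((hasDerivAt_cosh u).const_mul _).mul_const _

theorem pdv_glX : pdv (glX α) (u, v) = -(exp (-α) * cosh u * sin v) :=
  pdv_eq_of_hasDerivAt (differentiable_glX α _) <| by
    simp only [glX]
    simpa using (hasDerivAt_cos v).const_mul (exp (-α) * cosh u)

theorem pdu_glY : pdu (glY α) (u, v) = exp (-α) * cosh u * sin v :=
  pdu_eq_of_hasDerivAt (differentiable_glY α _) <| by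
    simp only [glY]
    exact ((hasDerivAt_sinh u).const_mul _).mul_const _

theorem pdv_glY : pdv (glY α) (u, v) = exp (-α) * sinh u * cos v :=
  pdv_eq_of_hasDerivAt (differentiable_glY α _) <| by
    simp only [glY]
    exact (hasDerivAt_sin v).const_mul _

theorem pdu_glZ : pdu glZ (u, v) = 0 :=
  pdu_eq_of_hasDerivAt differentiable_snd.differentiableAt (hasDerivAt_const u v)

theorem pdv_glZ : pdv glZ (u, v) = 1 :=
  pdv_eq_of_hasDerivAt differentiable_snd.differentiableAt (hasDerivAt_id v)

theorem pdu_glT : pdu (glT α a₀) (u, v) = 1 + exp (-(2 * α)) * cosh u * sinh u * cos v ^ 2 :=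
  pdu_eq_of_hasDerivAt (differentiable_glT α a₀ _) <| by
    simp only [glT]
    refine (((hasDerivAt_id' u).add ((((hasDerivAt_cosh u).fun_pow 2).const_mul
      (1 / 2 * exp (-(2 * α)))).mul_const (cos v ^ 2))).add_const a₀).congr_deriv ?_
    norm_num only [Nat.cast_ofNat]; ring

theorem pdv_glT : pdv (glT α a₀) (u, v) = -(exp (-(2 * α)) * cosh u ^ 2 * cos v * sin v) :=
  pdv_eq_of_hasDerivAt (differentiable_glT α a₀ _) <| by
    simp only [glT]
    refine ((((hasDerivAt_cos v).fun_pow 2).const_mul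
      (1 / 2 * exp (-(2 * α)) * cosh u ^ 2)).const_add u |>.add_const a₀).congr_deriv ?_
    norm_num only [Nat.cast_ofNat]; ring

end GluedFamily

/-- **The glued two-parameter family (Section 5.2)**: for all real `α, a₀`, the map
`F_{α,a₀}(u,v) = (e^{−α}cosh u cos v, e^{−α}sinh u sin v, v,
u + ½e^{−2α}cosh²u cos²v + a₀)` satisfies the `∂̄_J` system on all of `ℝ²`. -/
theorem glued_family_dbarJ (α a₀ : ℝ) :
    ∀ p : ℝ × ℝ,
      pdu (glX α) p - pdv (glY α) p = 0 ∧
      pdu (glY α) p + pdv (glX α) p = 0 ∧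
      pdu (glT α a₀) p - pdv glZ p = glX α p * pdv (glY α) p ∧
      pdu glZ p + pdv (glT α a₀) p = glX α p * pdv (glX α) p := by
  rintro ⟨u, v⟩
  have hexp : exp (-(2 * α)) = exp (-α) * exp (-α) := by rw [← exp_add]; ring_nf
  simp only [pdu_glX, pdv_glX, pdu_glY, pdv_glY, pdu_glZ, pdv_glZ, pdu_glT, pdv_glT, glX, hexp]
  refine ⟨?_, ?_, ?_, ?_⟩ <;> ring
end
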